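/- arXiv:1807.01947 — 2 statements merged into one kernel-verified Lean document; each statement's English description precedes it below -/
import Mathlib

section
/- Let a_s(η,k) = -(η - i(A - B))(η - i(A + B)) where A = s + (N+1)/2 and B = √(k(N+k) + s + (N+1)²/4), for real η, real s > 100 with dist(s, ℕ) = 1/2, and integer k ≥ 0. Then on the set where |η - i(A-B)| ≥ s/40, one has c(|η| + s + k)² ≤ |a_s(η,k)| ≤ C(|η| + s + k)² for constants c, C > 0 depending only on N. -/
/-!
Write `a = -z₁ z₂` with `z₁ = η - i(A - B)` and `z₂ = η - i(A + B)`. Since `A, B ≥ 0`, both factors have modulus at most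
`|η| + A + B`, and `|z₂| ≥ max(|η|, A + B)` is comparable to it; as `s ≤ A` and `k ≤ B ≤ A + k`,
this quantity is comparable to `|η| + s + k`. So the upper bound is immediate, and the lower bound
reduces to `|η| + s + k ≲ |z₁|`, which follows from `|z₁| ≥ |η|`, `|z₁| ≥ B - A ≥ k - A` and the
hypothesis `|z₁| ≥ s/40`, the last one absorbing both `s` and the constant `(N+1)/2` (as `s > 100`).
-/

open Complex

namespace Complex

variable (η r : ℝ)

lemma norm_ofReal_sub_I_mul_ofReal_le : ‖(η : ℂ) - I * r‖ ≤ |η| + |r| := by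
  simpa using norm_le_abs_re_add_abs_im ((η : ℂ) - I * r)

lemma abs_le_norm_ofReal_sub_I_mul_ofReal : |η| ≤ ‖(η : ℂ) - I * r‖ := by
  simpa using abs_re_le_norm ((η : ℂ) - I * r)

lemma abs_le_norm_ofReal_sub_I_mul_ofReal' : |r| ≤ ‖(η : ℂ) - I * r‖ := by
  simpa using abs_im_le_norm ((η : ℂ) - I * r)

end Complex

section Factors

variable {A B : ℝ} (η : ℝ) (hA : 0 ≤ A) (hB : 0 ≤ B)
include hA hB

lemma norm_ofReal_sub_I_mul_sub_le : ‖(η : ℂ) - I * (A - B : ℝ)‖ ≤ |η| + A + B := by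
  have := norm_ofReal_sub_I_mul_ofReal_le η (A - B)
  have : |A - B| ≤ A + B := abs_sub_le_of_nonneg_of_le hA (by linarith) hB (by linarith)
  linarith

lemma norm_ofReal_sub_I_mul_add_le : ‖(η : ℂ) - I * (A + B : ℝ)‖ ≤ |η| + A + B := by
  have := norm_ofReal_sub_I_mul_ofReal_le η (A + B)
  rw [abs_of_nonneg (by linarith : 0 ≤ A + B)] at this
  linarith

lemma half_le_norm_ofReal_sub_I_mul_add : (|η| + A + B) / 2 ≤ ‖(η : ℂ) - I * (A + B : ℝ)‖ := by
  have := abs_le_norm_ofReal_sub_I_mul_ofReal η (A + B)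
  have := abs_le_norm_ofReal_sub_I_mul_ofReal' η (A + B)
  rw [abs_of_nonneg (by linarith : 0 ≤ A + B)] at this
  linarith

end Factors

section SqrtBounds

variable {N k s : ℝ} (hN : 0 ≤ N) (hk : 0 ≤ k) (hs : 0 ≤ s)
include hN hk hs

lemma le_sqrt_mul_add_add_sq : k ≤ √(k * (N + k) + s + (N + 1) ^ 2 / 4) :=
  (Real.le_sqrt hk (by positivity)).2 (by nlinarith)

lemma sqrt_mul_add_add_sq_le : √(k * (N + k) + s + (N + 1) ^ 2 / 4) ≤ s + (N + 1) / 2 + k :=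
  (Real.sqrt_le_left (by positivity)).2 (by nlinarith)

end SqrtBounds

section MellinMultiplier

variable {N s k B : ℝ} (η : ℝ)

lemma abs_add_add_add_le_mul (hN : 0 ≤ N) (hs : 1 ≤ s) (hk : 0 ≤ k)
    (hBA : B ≤ s + (N + 1) / 2 + k) :
    |η| + (s + (N + 1) / 2) + B ≤ (N + 3) * (|η| + s + k) := by
  have : N + 1 ≤ (N + 1) * (|η| + s + k) := by nlinarith [abs_nonneg η]
  linarith [abs_nonneg η]

lemma abs_add_add_le_mul_norm (hN : 0 ≤ N) (hs : 100 < s) (hkB : k ≤ B)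
    (hfar : s / 40 ≤ ‖(η : ℂ) - I * (s + (N + 1) / 2 - B : ℝ)‖) :
    |η| + s + k ≤ (N + 83) * ‖(η : ℂ) - I * (s + (N + 1) / 2 - B : ℝ)‖ := by
  have := abs_le_norm_ofReal_sub_I_mul_ofReal η (s + (N + 1) / 2 - B)
  have := (neg_le_abs _).trans (abs_le_norm_ofReal_sub_I_mul_ofReal' η (s + (N + 1) / 2 - B))
  nlinarith [mul_le_mul_of_nonneg_left hfar (by linarith : 0 ≤ N + 1),
    mul_nonneg (by linarith : 0 ≤ N + 1) (by linarith : 0 ≤ s - 100)]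

lemma norm_multiplier_le (hN : 0 ≤ N) (hs : 1 ≤ s) (hk : 0 ≤ k) (hkB : k ≤ B)
    (hBA : B ≤ s + (N + 1) / 2 + k) :
    ‖((η : ℂ) - I * (s + (N + 1) / 2 - B : ℝ)) * ((η : ℂ) - I * (s + (N + 1) / 2 + B : ℝ))‖ ≤
      (N + 3) ^ 2 * (|η| + s + k) ^ 2 := by
  have hA : 0 ≤ s + (N + 1) / 2 := by positivity
  have hB : 0 ≤ B := hk.trans hkB
  have hsum := abs_add_add_add_le_mul η hN hs hk hBA
  rw [norm_mul]
  calc _ ≤ (|η| + (s + (N + 1) / 2) + B) * (|η| + (s + (N + 1) / 2) + B) :=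
        mul_le_mul (norm_ofReal_sub_I_mul_sub_le η hA hB) (norm_ofReal_sub_I_mul_add_le η hA hB)
          (norm_nonneg _) (by positivity)
    _ ≤ (N + 3) ^ 2 * (|η| + s + k) ^ 2 := by nlinarith [abs_nonneg η]

lemma le_norm_multiplier (hN : 0 ≤ N) (hs : 100 < s) (hk : 0 ≤ k) (hkB : k ≤ B)
    (hfar : s / 40 ≤ ‖(η : ℂ) - I * (s + (N + 1) / 2 - B : ℝ)‖) :
    1 / (2 * (N + 83)) * (|η| + s + k) ^ 2 ≤
      ‖((η : ℂ) - I * (s + (N + 1) / 2 - B : ℝ)) * ((η : ℂ) - I * (s + (N + 1) / 2 + B : ℝ))‖ := by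
  have hA : 0 ≤ s + (N + 1) / 2 := by positivity
  have hz₁ := abs_add_add_le_mul_norm η hN hs hkB hfar
  have hz₂ := half_le_norm_ofReal_sub_I_mul_add η hA (hk.trans hkB)
  rw [norm_mul, div_mul_eq_mul_div, one_mul, div_le_iff₀ (by positivity)]
  calc (|η| + s + k) ^ 2 = (|η| + s + k) * (|η| + s + k) := sq _
    _ ≤ (N + 83) * ‖(η : ℂ) - I * (s + (N + 1) / 2 - B : ℝ)‖ *
          (2 * ‖(η : ℂ) - I * (s + (N + 1) / 2 + B : ℝ)‖) :=
        mul_le_mul hz₁ (by linarith) (by positivity) (by positivity)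
    _ = _ := by ring

end MellinMultiplier

theorem stmt14_general (N : ℕ) :
    ∃ c C : ℝ, 0 < c ∧ 0 < C ∧
      ∀ (η s : ℝ) (k : ℕ), 100 < s → (∃ m : ℕ, s = (m : ℝ) + 1 / 2) →
        (let A : ℝ := s + ((N : ℝ) + 1) / 2
         let B : ℝ := Real.sqrt ((k : ℝ) * ((N : ℝ) + (k : ℝ)) + s + ((N : ℝ) + 1) ^ 2 / 4)
         let a : ℂ := -(((η : ℂ) - Complex.I * ((A : ℝ) - B : ℝ)) *
            ((η : ℂ) - Complex.I * ((A : ℝ) + B : ℝ)))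
         s / 40 ≤ ‖(η : ℂ) - Complex.I * ((A : ℝ) - B : ℝ)‖ →
           c * (|η| + s + (k : ℝ)) ^ 2 ≤ ‖a‖ ∧
             ‖a‖ ≤ C * (|η| + s + (k : ℝ)) ^ 2) := by
  refine ⟨1 / (2 * (N + 83)), (N + 3) ^ 2, by positivity, by positivity, ?_⟩
  intro η s k hs _ A B a hfar
  have hN : (0 : ℝ) ≤ N := N.cast_nonneg
  have hk : (0 : ℝ) ≤ k := k.cast_nonneg
  have hkB : (k : ℝ) ≤ B := le_sqrt_mul_add_add_sq hN hk (by linarith)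
  have hBA : B ≤ A + k := sqrt_mul_add_add_sq_le hN hk (by linarith)
  rw [show a = -_ from rfl, norm_neg]
  exact ⟨le_norm_multiplier η hN hs hk hkB hfar, norm_multiplier_le η hN (by linarith) hk hkB hBA⟩

/-- Two-sided bound `c(|η|+s+k)² ≤ |a_s(η,k)| ≤ C(|η|+s+k)²` for the Mellin multiplier
`a_s(η,k) = -(η - i(A-B))(η - i(A+B))`, `A = s+(N+1)/2`, `B = √(k(N+k)+s+(N+1)²/4)`,
on the region `|η - i(A-B)| ≥ s/40`, with `c, C` depending only on `N`. -/
theorem stmt14 (N : ℕ) (hN : 2 ≤ N) :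
    ∃ c C : ℝ, 0 < c ∧ 0 < C ∧
      ∀ (η s : ℝ) (k : ℕ), 100 < s → (∃ m : ℕ, s = (m : ℝ) + 1 / 2) →
        (let A : ℝ := s + ((N : ℝ) + 1) / 2
         let B : ℝ := Real.sqrt ((k : ℝ) * ((N : ℝ) + (k : ℝ)) + s + ((N : ℝ) + 1) ^ 2 / 4)
         let a : ℂ := -(((η : ℂ) - Complex.I * ((A : ℝ) - B : ℝ)) *
            ((η : ℂ) - Complex.I * ((A : ℝ) + B : ℝ)))
         s / 40 ≤ ‖(η : ℂ) - Complex.I * ((A : ℝ) - B : ℝ)‖ →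
           c * (|η| + s + (k : ℝ)) ^ 2 ≤ ‖a‖ ∧
             ‖a‖ ≤ C * (|η| + s + (k : ℝ)) ^ 2) :=
  stmt14_general N
end

section
/- Suppose u ∈ L²(B₁) ∩ L^{2^*}(B₁) with 2^* > 2 satisfies ∫_{B_r} u² ψ dz dt = O(r^l) for all l > 0 as r → 0⁺, where ψ(z,t) = |z|²/(|z|^4+4t²)^{1/2}, and suppose for some q ∈ (2, 2^*) the weight ψ^{-1/(q-1)} is integrable on B₁. Then ∫_{B_r} |u| dz dt = O(r^k) for all k > 0 as r → 0⁺. -/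
open MeasureTheory

/-- The gauge ball `B_r = {(z,t) : (|z|⁴+4t²)^{1/4} < r}` in `ℝ^N × ℝ`. -/
def gBall (N : ℕ) (r : ℝ) : Set (EuclideanSpace ℝ (Fin N) × ℝ) :=
  {p | (‖p.1‖ ^ 4 + 4 * p.2 ^ 2) ^ ((1 : ℝ) / 4) < r}

/-- The degenerate weight `ψ(z,t) = |z|²/(|z|⁴+4t²)^{1/2}`. -/
noncomputable def psiW (N : ℕ) (p : EuclideanSpace ℝ (Fin N) × ℝ) : ℝ :=
  ‖p.1‖ ^ 2 / Real.sqrt (‖p.1‖ ^ 4 + 4 * p.2 ^ 2)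

open scoped ENNReal

/-!
Writing `s = 2^*`, `β = 1/(q-1)`, `a = (s-1)/(sq-2)`, `b = (q-2)/(sq-2)` and `c = a(q-1)`, one has
`a + b + c = 1`, `2a + sb = 1`, `a = βc`, hence pointwise
`|u| = (u² ψ)^a · (|u|^s)^b · (ψ^{-β})^c`.
Hölder's inequality with three factors (which packages the weighted interpolation inequality
and the final Hölder step) bounds `∫_{B_r} |u|` by `K (∫_{B_r} u² ψ)^a`, with `K` controlled by
`‖u‖_{L^s(B₁)}` and `∫_{B₁} ψ^{-β}`. Since `a > 0`, vanishing of order `k/a` of the weighted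
integral gives vanishing of order `k` of `∫_{B_r} |u|`.
-/

theorem ENNReal.lintegral_rpow_mul_rpow_mul_rpow_le {α : Type*} [MeasurableSpace α]
    {μ : Measure α} {f g h : α → ℝ≥0∞} (hf : AEMeasurable f μ) (hg : AEMeasurable g μ)
    (hh : AEMeasurable h μ) {a b c : ℝ} (ha : 0 ≤ a) (hb : 0 ≤ b) (hc : 0 ≤ c)
    (habc : a + b + c = 1) :
    ∫⁻ x, f x ^ a * g x ^ b * h x ^ c ∂μ ≤
      (∫⁻ x, f x ∂μ) ^ a * (∫⁻ x, g x ∂μ) ^ b * (∫⁻ x, h x ∂μ) ^ c := by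
  have := ENNReal.lintegral_prod_norm_pow_le (μ := μ) Finset.univ (f := ![f, g, h])
    (fun i _ => by fin_cases i <;> assumption) (p := ![a, b, c])
    (by simpa [Fin.sum_univ_three] using habc) (fun i _ => by fin_cases i <;> assumption)
  simpa [Fin.prod_univ_three, mul_assoc] using this

theorem Real.eq_sq_mul_rpow_mul_rpow_mul_rpow {x w a b c s β : ℝ} (hx : 0 ≤ x) (hw : 0 < w)
    (hs : 2 * a + s * b = 1) (hβ : a = β * c) :
    x = (x ^ 2 * w) ^ a * (x ^ s) ^ b * (w ^ (-β)) ^ c := by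
  have hx2 : (x ^ 2) ^ a = x ^ (2 * a) := by
    rw [← Real.rpow_natCast, ← Real.rpow_mul hx]; norm_num
  rw [Real.mul_rpow (by positivity) hw.le, hx2, ← Real.rpow_mul hx, ← Real.rpow_mul hw.le,
    mul_right_comm _ (w ^ a), mul_assoc, ← Real.rpow_add' hx (by rw [hs]; norm_num), hs,
    ← Real.rpow_add hw, hβ]
  simp

theorem integral_abs_le_weighted_holder {α : Type*} [MeasurableSpace α] {μ : Measure α}
    {f w : α → ℝ} {s β a b c : ℝ} (hf : AEStronglyMeasurable f μ) (hw : ∀ᵐ x ∂μ, 0 < w x)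
    (hfw : Integrable (fun x => f x ^ 2 * w x) μ) (hfs : Integrable (fun x => |f x| ^ s) μ)
    (hwβ : Integrable (fun x => w x ^ (-β)) μ) (ha : 0 ≤ a) (hb : 0 ≤ b) (hc : 0 ≤ c)
    (habc : a + b + c = 1) (hs : 2 * a + s * b = 1) (hβ : a = β * c) :
    ∫ x, |f x| ∂μ ≤
      (∫ x, f x ^ 2 * w x ∂μ) ^ a * (∫ x, |f x| ^ s ∂μ) ^ b * (∫ x, w x ^ (-β) ∂μ) ^ c := by
  have hfw0 : 0 ≤ᵐ[μ] fun x => f x ^ 2 * w x :=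
    hw.mono fun x hx => mul_nonneg (sq_nonneg _) hx.le
  have hfs0 : 0 ≤ᵐ[μ] fun x => |f x| ^ s := ae_of_all _ fun x => by positivity
  have hwβ0 : 0 ≤ᵐ[μ] fun x => w x ^ (-β) := hw.mono fun x hx => by positivity
  have hpt : ∀ᵐ x ∂μ, ENNReal.ofReal |f x| = ENNReal.ofReal (f x ^ 2 * w x) ^ a *
      ENNReal.ofReal (|f x| ^ s) ^ b * ENNReal.ofReal (w x ^ (-β)) ^ c := by
    filter_upwards [hw] with x hx
    rw [ENNReal.ofReal_rpow_of_nonneg (by positivity) ha,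
      ENNReal.ofReal_rpow_of_nonneg (by positivity) hb,
      ENNReal.ofReal_rpow_of_nonneg (by positivity) hc, ← ENNReal.ofReal_mul (by positivity),
      ← ENNReal.ofReal_mul (by positivity), ← sq_abs (f x),
      ← Real.eq_sq_mul_rpow_mul_rpow_mul_rpow (abs_nonneg _) hx hs hβ]
  have hholder := (lintegral_congr_ae hpt).trans_le <|
    ENNReal.lintegral_rpow_mul_rpow_mul_rpow_le hfw.1.aemeasurable.ennreal_ofReal
      hfs.1.aemeasurable.ennreal_ofReal hwβ.1.aemeasurable.ennreal_ofReal ha hb hc habc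
  rw [integral_eq_lintegral_of_nonneg_ae (ae_of_all _ fun x => abs_nonneg _) hf.norm,
    integral_eq_lintegral_of_nonneg_ae hfw0 hfw.1, integral_eq_lintegral_of_nonneg_ae hfs0 hfs.1,
    integral_eq_lintegral_of_nonneg_ae hwβ0 hwβ.1, ENNReal.toReal_rpow, ENNReal.toReal_rpow,
    ENNReal.toReal_rpow, ← ENNReal.toReal_mul, ← ENNReal.toReal_mul]
  refine ENNReal.toReal_mono ?_ hholder
  exact ENNReal.mul_ne_top (ENNReal.mul_ne_top
    (ENNReal.rpow_ne_top_of_nonneg ha hfw.lintegral_lt_top.ne)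
    (ENNReal.rpow_ne_top_of_nonneg hb hfs.lintegral_lt_top.ne))
    (ENNReal.rpow_ne_top_of_nonneg hc hwβ.lintegral_lt_top.ne)

theorem exists_weighted_holder_exponents {q s : ℝ} (hq : 2 ≤ q) (hs : 1 < s) :
    ∃ a b c : ℝ, 0 < a ∧ 0 ≤ b ∧ 0 ≤ c ∧ a + b + c = 1 ∧ 2 * a + s * b = 1 ∧
      a = 1 / (q - 1) * c := by
  have hD : 0 < s * q - 2 := by nlinarith
  refine ⟨(s - 1) / (s * q - 2), (q - 2) / (s * q - 2), (s - 1) / (s * q - 2) * (q - 1),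
    by positivity, div_nonneg (by linarith) hD.le,
    mul_nonneg (div_nonneg (by linarith) hD.le) (by linarith), ?_, ?_, ?_⟩
  · field_simp; ring
  · field_simp; ring
  · field_simp [show q - 1 ≠ 0 by linarith]

def VanishesToInfiniteOrder (F : ℝ → ℝ) : Prop :=
  ∀ k : ℝ, 0 < k → ∃ C > 0, ∃ r0 > 0, ∀ r : ℝ, 0 < r → r < r0 → F r ≤ C * r ^ k

theorem VanishesToInfiniteOrder.of_le_mul_rpow {F G : ℝ → ℝ} (hG : VanishesToInfiniteOrder G)
    {K a ρ : ℝ} (hK : 0 < K) (ha : 0 < a) (hρ : 0 < ρ) (hG0 : ∀ r, 0 ≤ G r)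
    (hFG : ∀ r, 0 < r → r < ρ → F r ≤ K * G r ^ a) : VanishesToInfiniteOrder F := by
  intro k hk
  obtain ⟨C, hC, r0, hr0, hGC⟩ := hG (k / a) (div_pos hk ha)
  refine ⟨K * C ^ a, by positivity, min r0 ρ, lt_min hr0 hρ, fun r hr hrr => ?_⟩
  calc F r ≤ K * G r ^ a := hFG r hr (hrr.trans_le (min_le_right _ _))
    _ ≤ K * (C * r ^ (k / a)) ^ a := by
        gcongr
        · exact hG0 r
        · exact hGC r hr (hrr.trans_le (min_le_left _ _))
    _ = K * C ^ a * r ^ k := by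
        rw [Real.mul_rpow hC.le (by positivity), ← Real.rpow_mul hr.le, div_mul_cancel₀ k ha.ne']
        ring

section GaugeBall

variable {N : ℕ}

theorem gBall_mono {r r' : ℝ} (h : r ≤ r') : gBall N r ⊆ gBall N r' :=
  fun _ hp => lt_of_lt_of_le hp h

theorem psiW_nonneg (p : EuclideanSpace ℝ (Fin N) × ℝ) : 0 ≤ psiW N p := by
  unfold psiW; positivity

theorem psiW_le_one (p : EuclideanSpace ℝ (Fin N) × ℝ) : psiW N p ≤ 1 := by
  refine div_le_one_of_le₀ ?_ (Real.sqrt_nonneg _)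
  rw [← Real.sqrt_sq (by positivity : 0 ≤ ‖p.1‖ ^ 2)]
  exact Real.sqrt_le_sqrt (by nlinarith [sq_nonneg p.2])

theorem psiW_pos {p : EuclideanSpace ℝ (Fin N) × ℝ} (hz : p.1 ≠ 0) : 0 < psiW N p := by
  have := norm_pos_iff.mpr hz
  unfold psiW; positivity

theorem measurable_psiW : Measurable (psiW N) := by
  unfold psiW; fun_prop

theorem ae_psiW_pos (hN : 0 < N) : ∀ᵐ p : EuclideanSpace ℝ (Fin N) × ℝ, 0 < psiW N p := by
  have : Nonempty (Fin N) := ⟨⟨0, hN⟩⟩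
  rw [Measure.volume_eq_prod]
  exact (Measure.quasiMeasurePreserving_fst.ae (Measure.ae_ne volume 0)).mono
    fun p hz => psiW_pos hz

theorem integrableOn_sq_mul_psiW {u : EuclideanSpace ℝ (Fin N) × ℝ → ℝ}
    {S : Set (EuclideanSpace ℝ (Fin N) × ℝ)} (hu : MemLp u 2 (volume.restrict S)) :
    IntegrableOn (fun p => u p ^ 2 * psiW N p) S :=
  hu.integrable_sq.mul_bdd measurable_psiW.aestronglyMeasurable <| ae_of_all _ fun p => by
    rw [Real.norm_of_nonneg (psiW_nonneg p)]
    exact psiW_le_one p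

theorem exists_integral_abs_gBall_le (hN : 0 < N) {u : EuclideanSpace ℝ (Fin N) × ℝ → ℝ}
    {s β a b c : ℝ} (hu : MemLp u 2 (volume.restrict (gBall N 1)))
    (hus : IntegrableOn (fun p => |u p| ^ s) (gBall N 1))
    (hψ : IntegrableOn (fun p => psiW N p ^ (-β)) (gBall N 1)) (ha : 0 ≤ a) (hb : 0 ≤ b)
    (hc : 0 ≤ c) (habc : a + b + c = 1) (hs : 2 * a + s * b = 1) (hβ : a = β * c) :
    ∃ K > 0, ∀ r ≤ 1, ∫ p in gBall N r, |u p| ≤ K * (∫ p in gBall N r, u p ^ 2 * psiW N p) ^ a := by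
  set A := ∫ p in gBall N 1, |u p| ^ s
  set B := ∫ p in gBall N 1, psiW N p ^ (-β)
  have hψ0 : ∀ p, 0 ≤ psiW N p ^ (-β) := fun p => Real.rpow_nonneg (psiW_nonneg p) _
  have hA : 0 ≤ A := integral_nonneg fun p => by positivity
  have hB : 0 ≤ B := integral_nonneg hψ0
  refine ⟨A ^ b * B ^ c + 1, by positivity, fun r hr => ?_⟩
  have hsub : gBall N r ⊆ gBall N 1 := gBall_mono hr
  set G := ∫ p in gBall N r, u p ^ 2 * psiW N p
  have hG : 0 ≤ G := integral_nonneg fun p => mul_nonneg (sq_nonneg _) (psiW_nonneg p)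
  have hAr : ∫ p in gBall N r, |u p| ^ s ≤ A :=
    setIntegral_mono_set hus (ae_of_all _ fun p => by positivity) hsub.eventuallyLE
  have hBr : ∫ p in gBall N r, psiW N p ^ (-β) ≤ B :=
    setIntegral_mono_set hψ (ae_of_all _ hψ0) hsub.eventuallyLE
  have hAr0 : 0 ≤ ∫ p in gBall N r, |u p| ^ s := integral_nonneg fun p => by positivity
  have hBr0 : 0 ≤ ∫ p in gBall N r, psiW N p ^ (-β) := integral_nonneg hψ0
  calc ∫ p in gBall N r, |u p|
      ≤ G ^ a * (∫ p in gBall N r, |u p| ^ s) ^ b * (∫ p in gBall N r, psiW N p ^ (-β)) ^ c :=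
        integral_abs_le_weighted_holder (hu.1.mono_set hsub)
          (ae_restrict_of_ae (ae_psiW_pos hN)) ((integrableOn_sq_mul_psiW hu).mono_set hsub)
          (hus.mono_set hsub) (hψ.mono_set hsub) ha hb hc habc hs hβ
    _ ≤ G ^ a * A ^ b * B ^ c := by gcongr
    _ ≤ (A ^ b * B ^ c + 1) * G ^ a := by nlinarith [Real.rpow_nonneg hG a]

end GaugeBall

theorem stmt17_general (N : ℕ) (hN : 2 ≤ N) (u : EuclideanSpace ℝ (Fin N) × ℝ → ℝ)
    (hu2 : MemLp u 2 (volume.restrict (gBall N 1)))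
    (hu2s : MemLp u (ENNReal.ofReal (2 * ((N : ℝ) + 2) / (N : ℝ)))
      (volume.restrict (gBall N 1)))
    (q : ℝ) (hq1 : 2 < q)
    (hpsi : IntegrableOn (fun p => psiW N p ^ (-(1 / (q - 1)))) (gBall N 1))
    (hvan : ∀ l : ℝ, 0 < l → ∃ C > 0, ∃ r0 > 0, ∀ r : ℝ, 0 < r → r < r0 →
      (∫ p in gBall N r, (u p) ^ 2 * psiW N p) ≤ C * r ^ l) :
    ∀ k : ℝ, 0 < k → ∃ C > 0, ∃ r0 > 0, ∀ r : ℝ, 0 < r → r < r0 →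
      (∫ p in gBall N r, |u p|) ≤ C * r ^ k := by
  set s : ℝ := 2 * ((N : ℝ) + 2) / N with hs_def
  have hs : 1 < s := by
    rw [hs_def, lt_div_iff₀ (by positivity)]
    linarith
  obtain ⟨a, b, c, ha, hb, hc, habc, has, hac⟩ := exists_weighted_holder_exponents hq1.le hs
  have hus : IntegrableOn (fun p => |u p| ^ s) (gBall N 1) := by
    rw [IntegrableOn]
    simpa [ENNReal.toReal_ofReal (by linarith : 0 ≤ s)] using
      hu2s.integrable_norm_rpow (by simp only [ne_eq, ENNReal.ofReal_eq_zero, not_le]; linarith)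
        ENNReal.ofReal_ne_top
  obtain ⟨K, hK, hbound⟩ :=
    exists_integral_abs_gBall_le (by omega) hu2 hus hpsi ha.le hb hc habc has hac
  exact VanishesToInfiniteOrder.of_le_mul_rpow hvan hK ha one_pos
    (fun r => integral_nonneg fun p => mul_nonneg (sq_nonneg _) (psiW_nonneg p))
    fun r _ hr => hbound r hr.le

/-- If `u ∈ L²(B₁) ∩ L^{2^*}(B₁)` vanishes to infinite order at the origin with respect to
the weight `ψ`, and `ψ^{-1/(q-1)}` is integrable on `B₁` for some `q ∈ (2,2^*)`, then
`u` vanishes to infinite order in the `L¹` mean. -/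
theorem stmt17 (N : ℕ) (hN : 2 ≤ N) (u : EuclideanSpace ℝ (Fin N) × ℝ → ℝ)
    (hu2 : MemLp u 2 (volume.restrict (gBall N 1)))
    (hu2s : MemLp u (ENNReal.ofReal (2 * ((N : ℝ) + 2) / (N : ℝ)))
      (volume.restrict (gBall N 1)))
    (q : ℝ) (hq1 : 2 < q) (hq2 : q < 2 * ((N : ℝ) + 2) / (N : ℝ))
    (hpsi : IntegrableOn (fun p => psiW N p ^ (-(1 / (q - 1)))) (gBall N 1))
    (hvan : ∀ l : ℝ, 0 < l → ∃ C > 0, ∃ r0 > 0, ∀ r : ℝ, 0 < r → r < r0 →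
      (∫ p in gBall N r, (u p) ^ 2 * psiW N p) ≤ C * r ^ l) :
    ∀ k : ℝ, 0 < k → ∃ C > 0, ∃ r0 > 0, ∀ r : ℝ, 0 < r → r < r0 →
      (∫ p in gBall N r, |u p|) ≤ C * r ^ k :=
  stmt17_general N hN u hu2 hu2s q hq1 hpsi hvan
end
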